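/- Let A be a symmetric real n×n matrix. Then for all sufficiently large λ and λ' (depending on A, with λ' much larger than λ), the matrix B = A + λE + λ'I (E the all-ones matrix, I the identity) is a matrix of Gromov products at a fixed base point r of some metric space: specifically, defining d(x,y) = B_{xx} + B_{yy} − 2B_{xy} for x ≠ y and d(x,x) = 0 gives a metric d on {1,…,n} (possibly extended by the base point r), with (x|y)_r = B_{xy}. -/

import Mathlib

/-- The matrix `B = A + λ E + λ' I` (with `E` the all-ones matrix, `I` the identity). -/
noncomputable def shiftMat {n : ℕ} (A : Fin n → Fin n → ℝ) (lam lam' : ℝ) :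
    Fin n → Fin n → ℝ :=
  fun x y => A x y + lam + (if x = y then lam' else 0)

/-- The distance function on the `n` points together with an extra base point `r`
(modelled as `none : Option (Fin n)`), defined so that the Gromov products at `r`
are the entries of `B = A + λ E + λ' I`:
`d(x,y) = B_{xx} + B_{yy} - 2 B_{xy}` for `x ≠ y`, `d(x,r) = B_{xx}`. -/
noncomputable def distExt {n : ℕ} (A : Fin n → Fin n → ℝ) (lam lam' : ℝ) :
    Option (Fin n) → Option (Fin n) → ℝ
  | none, none => 0
  | some x, none => shiftMat A lam lam' x x
  | none, some y => shiftMat A lam lam' y y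
  | some x, some y =>
      if x = y then 0 else
        shiftMat A lam lam' x x + shiftMat A lam lam' y y - 2 * shiftMat A lam lam' x y

/-!
A kernel `B` on `ι` is the matrix of Gromov products at a base point `r` of the distance
`d(x,r) = B x x`, `d(x,y) = B x x + B y y - 2 B x y` on `ι ∪ {r}`. Unfolding the triangle
inequalities, `d` is a metric as soon as `B` is nonnegative with positive diagonal, every
off-diagonal entry is below the diagonal entry of its column, and
`B x y + B y z ≤ B y y + B x z` (the triangle inequality at `y`).

For `B = A + λ E + λ' I` the all-ones shift `λ` cancels from the last two conditions, so
they only ask `λ'` to beat a multiple of `max |A x y|`, while `λ ≥ max |A x y|` makes `B`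
nonnegative.
-/

section GromovDist

variable {ι : Type*} [DecidableEq ι] (B : ι → ι → ℝ)

/-- `none` plays the role of the base point. -/
def gromovDist : Option ι → Option ι → ℝ
  | none, none => 0
  | some x, none => B x x
  | none, some y => B y y
  | some x, some y => if x = y then 0 else B x x + B y y - 2 * B x y

theorem gromovDist_self (u : Option ι) : gromovDist B u u = 0 := by
  cases u <;> simp [gromovDist]

theorem gromovDist_gromovProduct (x y : ι) :
    (gromovDist B (some x) none + gromovDist B (some y) none
      - gromovDist B (some x) (some y)) / 2 = B x y := by
  by_cases h : x = y
  · subst h; simp [gromovDist]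
  · simp only [gromovDist, if_neg h]; ring

variable {B}

theorem gromovDist_comm (hsymm : ∀ x y, B x y = B y x) (u v : Option ι) :
    gromovDist B u v = gromovDist B v u := by
  rcases u with _ | x <;> rcases v with _ | y <;> simp only [gromovDist]
  by_cases h : x = y
  · simp [h]
  · simp only [if_neg h, if_neg (Ne.symm h), hsymm x y]; ring

theorem gromovDist_pos (hsymm : ∀ x y, B x y = B y x) (hdiag : ∀ x, 0 < B x x)
    (hoff : ∀ x y, x ≠ y → B x y < B y y) (u v : Option ι) (huv : u ≠ v) :
    0 < gromovDist B u v := by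
  rcases u with _ | x <;> rcases v with _ | y
  · exact absurd rfl huv
  · exact hdiag y
  · exact hdiag x
  · have hxy : x ≠ y := fun h => huv (congrArg some h)
    have := hoff y x (Ne.symm hxy)
    simp only [gromovDist, if_neg hxy]
    linarith [hoff x y hxy, hsymm x y]

theorem gromovDist_triangle (hsymm : ∀ x y, B x y = B y x) (hnonneg : ∀ x y, 0 ≤ B x y)
    (hoff : ∀ x y, x ≠ y → B x y ≤ B y y)
    (hfour : ∀ x y z, x ≠ y → y ≠ z → B x y + B y z ≤ B y y + B x z) (u v t : Option ι) :
    gromovDist B u t ≤ gromovDist B u v + gromovDist B v t := by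
  rcases u with _ | x <;> rcases v with _ | y <;> rcases t with _ | z
  · simp [gromovDist]
  · simp [gromovDist]
  · simp only [gromovDist]; linarith [hnonneg y y]
  · by_cases hyz : y = z
    · subst hyz; simp [gromovDist]
    · simp only [gromovDist, if_neg hyz]
      linarith [hoff z y (Ne.symm hyz), hsymm y z]
  · simp [gromovDist]
  · by_cases hxz : x = z
    · subst hxz; simp only [gromovDist, ↓reduceIte]; linarith [hnonneg x x]
    · simp only [gromovDist, if_neg hxz]; linarith [hnonneg x z]
  · by_cases hxy : x = y
    · subst hxy; simp [gromovDist]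
    · simp only [gromovDist, if_neg hxy]; linarith [hoff x y hxy]
  · by_cases hxy : x = y
    · subst hxy; simp [gromovDist]
    by_cases hyz : y = z
    · subst hyz; simp [gromovDist]
    by_cases hxz : x = z
    · subst hxz
      simp only [gromovDist, ↓reduceIte, if_neg hxy, if_neg hyz]
      linarith [hfour x y x hxy hyz]
    · simp only [gromovDist, if_neg hxy, if_neg hyz, if_neg hxz]
      linarith [hfour x y z hxy hyz]

end GromovDist

theorem distExt_eq_gromovDist {n : ℕ} (A : Fin n → Fin n → ℝ) (lam lam' : ℝ) :
    distExt A lam lam' = gromovDist (shiftMat A lam lam') := by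
  funext u v
  rcases u with _ | x <;> rcases v with _ | y <;> rfl

section ShiftMat

variable {n : ℕ} {A : Fin n → Fin n → ℝ} {M lam lam' : ℝ}

theorem shiftMat_symm (hsymm : ∀ x y, A x y = A y x) (x y : Fin n) :
    shiftMat A lam lam' x y = shiftMat A lam lam' y x := by
  simp only [shiftMat, hsymm x y, eq_comm (a := x)]

theorem shiftMat_nonneg (hM : ∀ x y, |A x y| ≤ M) (hlam : M ≤ lam) (hlam' : 0 ≤ lam')
    (x y : Fin n) : 0 ≤ shiftMat A lam lam' x y := by
  have := neg_abs_le (A x y)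
  unfold shiftMat
  split_ifs <;> linarith [hM x y]

theorem shiftMat_diag_pos (hM : ∀ x y, |A x y| ≤ M) (hlam : M ≤ lam) (hlam' : 0 < lam')
    (x : Fin n) : 0 < shiftMat A lam lam' x x := by
  have := neg_abs_le (A x x)
  simp only [shiftMat, if_true]
  linarith [hM x x]

theorem shiftMat_lt_diag (hM : ∀ x y, |A x y| ≤ M) (hlam' : 2 * M < lam') {x y : Fin n}
    (hxy : x ≠ y) : shiftMat A lam lam' x y < shiftMat A lam lam' y y := by
  have := neg_abs_le (A y y)
  simp only [shiftMat, if_neg hxy, ↓reduceIte]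
  linarith [le_abs_self (A x y), hM x y, hM y y]

theorem shiftMat_four_point (hM : ∀ x y, |A x y| ≤ M) (hlam' : 4 * M ≤ lam') {x y z : Fin n}
    (hxy : x ≠ y) (hyz : y ≠ z) :
    shiftMat A lam lam' x y + shiftMat A lam lam' y z ≤
      shiftMat A lam lam' y y + shiftMat A lam lam' x z := by
  have hAyy := neg_abs_le (A y y)
  have hAxz := neg_abs_le (A x z)
  have hshift : 0 ≤ if x = z then lam' else 0 := by
    split_ifs <;> linarith [abs_nonneg (A x x), hM x x]
  simp only [shiftMat, if_neg hxy, if_neg hyz, ↓reduceIte]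
  linarith [le_abs_self (A x y), le_abs_self (A y z), hM x y, hM y z, hM y y, hM x z]

end ShiftMat

/-- For any symmetric real matrix `A` and all sufficiently large `λ` and `λ'`
(`λ'` much larger than `λ`), `B = A + λ E + λ' I` is a matrix of Gromov products at a
fixed base point `r`: the induced distance `distExt` is a metric on the `n` points
extended by the base point, and the Gromov product of `x, y` at `r` equals `B_{xy}`. -/
theorem shiftMat_is_gromov_matrix {n : ℕ} (A : Fin n → Fin n → ℝ)
    (hsymm : ∀ x y, A x y = A y x) :
    ∃ lam₀ : ℝ, ∀ lam : ℝ, lam₀ ≤ lam → ∃ lam₁ : ℝ, ∀ lam' : ℝ, lam₁ ≤ lam' →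
      ((∀ u : Option (Fin n), distExt A lam lam' u u = 0) ∧
       (∀ u v : Option (Fin n), distExt A lam lam' u v = distExt A lam lam' v u) ∧
       (∀ u v : Option (Fin n), u ≠ v → 0 < distExt A lam lam' u v) ∧
       (∀ u v t : Option (Fin n),
          distExt A lam lam' u t ≤ distExt A lam lam' u v + distExt A lam lam' v t)) ∧
      (∀ x y : Fin n,
        (distExt A lam lam' (some x) none + distExt A lam lam' (some y) none
          - distExt A lam lam' (some x) (some y)) / 2 = shiftMat A lam lam' x y) := by
  have hM : ∀ x y, |A x y| ≤ ‖A‖ := fun x y =>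
    (norm_le_pi_norm (A x) y).trans (norm_le_pi_norm A x)
  have hA := norm_nonneg A
  refine ⟨‖A‖, fun lam hlam => ⟨4 * ‖A‖ + 1, fun lam' hlam' => ?_⟩⟩
  have hsymmB := shiftMat_symm (lam := lam) (lam' := lam') hsymm
  have hoff : ∀ x y, x ≠ y → shiftMat A lam lam' x y < shiftMat A lam lam' y y :=
    fun x y => shiftMat_lt_diag hM (by linarith)
  rw [distExt_eq_gromovDist]
  refine ⟨⟨gromovDist_self _, gromovDist_comm hsymmB,
    gromovDist_pos hsymmB (shiftMat_diag_pos hM hlam (by linarith)) hoff,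
    gromovDist_triangle hsymmB (shiftMat_nonneg hM hlam (by linarith))
      (fun x y h => (hoff x y h).le) (fun x y z => shiftMat_four_point hM (by linarith))⟩,
    gromovDist_gromovProduct _⟩
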